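/- In Y_d(n, p_n) with p_n = n^{−α}, 0 < α < 1, and c > 3α − 2, set q_n = (1+ε)p_n and t_n = (1+n^c)p_n for fixed ε ∈ (0,1). With probability at least 1 − e^{−a n^b} for some a, b > 0, simultaneously for every (d−1)-simplex σ: deg(σ) < n q_n and the number of d-simplexes spanned by pairs of neighbours of σ that do not contain σ is less than (d/2) n² q_n² t_n. -/

import Mathlib

/-!
Fix a `(d-1)`-simplex `σ`. Its degree counts at most `n` independent `Bernoulli(p)` faces, so a
Chernoff bound makes `deg σ ≥ (1 + δ) n p` exponentially unlikely. A `d`-simplex spanned by two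
neighbours of `σ` but not containing `σ` is determined by the vertex of `σ` it misses and the two
neighbour vertices it adds, so there are at most `d · C(deg σ, 2)` candidates. The candidates are
determined by the faces containing `σ` and are disjoint from them, so conditionally on those faces
the number of candidates present is a binomial count with at most `(d/2) deg(σ)²` trials, and a
second Chernoff bound applies on `{deg σ < (1 + δ) n p}`. A union bound over the `≤ n^d` simplices
`σ` loses only a polynomial factor against the bounds `exp (-κ n^b)`.
-/

open MeasureTheory Finset
open scoped ENNReal

/-- The Linial–Meshulam measure `Y_d(n,p)`. -/
noncomputable def linialMeshulam (n : ℕ) (p : ℝ≥0∞) :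
    Measure (Finset (Fin n) → Bool) :=
  Measure.pi fun _ => (PMF.bernoulli (min p 1).toNNReal
    (by simpa using ENNReal.toNNReal_mono ENNReal.one_ne_top (min_le_right p 1))).toMeasure

/-- `σ ∼ σ'` in the configuration `ω`. -/
def nbr (n d : ℕ) (ω : Finset (Fin n) → Bool) (σ σ' : Finset (Fin n)) : Prop :=
  σ'.card = d ∧ (σ ∪ σ').card = d + 1 ∧ ω (σ ∪ σ') = true

instance (n d : ℕ) (ω : Finset (Fin n) → Bool) (σ σ' : Finset (Fin n)) :
    Decidable (nbr n d ω σ σ') := by unfold nbr; infer_instance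

open ProbabilityTheory Real Filter Topology

noncomputable def chernoffRate (δ : ℝ) : ℝ := log (1 + δ) - δ / (1 + δ)

lemma chernoffRate_pos {δ : ℝ} (hδ : 0 < δ) : 0 < chernoffRate δ := by
  rw [chernoffRate, sub_pos]
  refine lt_of_le_of_lt ?_ (lt_log_one_add_of_pos hδ)
  rw [div_le_div_iff₀ (by positivity) (by positivity)]
  nlinarith

section Chernoff

variable {I : Type*} [Fintype I] {μ : Measure (I → Bool)} {p r : ℝ}

lemma integral_ite_apply_eq [IsProbabilityMeasure μ] (i : I) :
    ∫ ω, (if ω i = true then r else 1) ∂μ = 1 + (r - 1) * μ.real {ω | ω i = true} := by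
  have h : (fun ω : I → Bool ↦ if ω i = true then r else 1)
      = fun ω ↦ 1 + (r - 1) * {ω : I → Bool | ω i = true}.indicator 1 ω := by
    ext ω; by_cases h : ω i = true <;> simp [h]
  rw [h, integral_add (integrable_const _) .of_finite, integral_const_mul,
    integral_indicator_one .of_discrete]
  simp

lemma integral_pow_card_filter_le [DecidableEq I] (hind : iIndepFun (fun i ω ↦ ω i) μ)
    (hp : ∀ i, μ.real {ω | ω i = true} ≤ p) (hr : 1 ≤ r) (S : Finset I) :
    ∫ ω, r ^ #{i ∈ S | ω i = true} ∂μ ≤ exp ((r - 1) * p * #S) := by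
  have := hind.isProbabilityMeasure
  have hprod (ω : I → Bool) :
      r ^ #{i ∈ S | ω i = true} = ∏ i, if i ∈ S then (if ω i = true then r else 1) else 1 := by
    rw [prod_ite_mem, univ_inter, prod_ite, prod_const, prod_const_one, mul_one]
  simp_rw [hprod]
  rw [hind.integral_fun_prod_comp (f := fun i b ↦ if i ∈ S then (if b = true then r else 1) else 1)
    (fun _ ↦ Measurable.of_discrete.aemeasurable)
    fun _ ↦ Measurable.of_discrete.aestronglyMeasurable]
  calc ∏ i, ∫ ω, (if i ∈ S then (if ω i = true then r else 1) else 1) ∂μ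
      ≤ ∏ i, if i ∈ S then exp ((r - 1) * p) else 1 := by
        refine prod_le_prod (fun i _ ↦ integral_nonneg fun ω ↦ ?_) fun i _ ↦ ?_
        · simp only [Pi.zero_apply]; split_ifs <;> linarith
        split_ifs
        · simp only [integral_ite_apply_eq]
          calc 1 + (r - 1) * μ.real {ω | ω i = true} ≤ 1 + (r - 1) * p := by
                gcongr
                exact hp i
            _ ≤ exp ((r - 1) * p) := by linarith [add_one_le_exp ((r - 1) * p)]
        · simp
    _ = exp ((r - 1) * p * #S) := by
        rw [prod_ite_mem, univ_inter, prod_const, ← exp_nat_mul]; ring_nf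

lemma integral_mul_eq_mul_integral_of_dependsOn (hind : iIndepFun (fun i ω ↦ ω i) μ)
    {J K : Finset I} (hJK : Disjoint J K) {f g : (I → Bool) → ℝ} (hf : DependsOn f J)
    (hg : DependsOn g K) :
    ∫ ω, f ω * g ω ∂μ = (∫ ω, f ω ∂μ) * ∫ ω, g ω ∂μ := by
  obtain ⟨F, rfl⟩ := dependsOn_iff_exists_comp.1 hf
  obtain ⟨G, rfl⟩ := dependsOn_iff_exists_comp.1 hg
  exact ((hind.indepFun_finset J K hJK fun _ ↦ .of_discrete).comp .of_discrete
    .of_discrete).integral_fun_mul_eq_mul_integral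
    Measurable.of_discrete.aestronglyMeasurable Measurable.of_discrete.aestronglyMeasurable

variable [DecidableEq I] {J : Finset I} {A : (I → Bool) → Prop} [DecidablePred A]
  {E : (I → Bool) → Finset I} {M : ℝ}

/-- Conditionally on the coordinates in `J`, the count is dominated by a binomial variable
with `M` trials, whose moment generating function is at most `exp ((r - 1) p M)`. -/
lemma integral_ite_pow_card_filter_le (hind : iIndepFun (fun i ω ↦ ω i) μ) (hp0 : 0 ≤ p)
    (hp : ∀ i, μ.real {ω | ω i = true} ≤ p) (hr : 1 ≤ r) (hA : DependsOn A J)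
    (hE : DependsOn E J) (hEJ : ∀ ω, Disjoint J (E ω)) (hM : ∀ ω, A ω → (#(E ω) : ℝ) ≤ M) :
    ∫ ω, (if A ω then r ^ #{i ∈ E ω | ω i = true} else 0) ∂μ ≤ exp ((r - 1) * p * M) := by
  have := hind.isProbabilityMeasure
  set g : Finset I → (I → Bool) → ℝ := fun S ω ↦ if A ω ∧ E ω = S then 1 else 0
  have hsplit (ω : I → Bool) : (if A ω then r ^ #{i ∈ E ω | ω i = true} else 0)
      = ∑ S, g S ω * r ^ #{i ∈ S | ω i = true} := by
    by_cases hAω : A ω <;> simp [g, hAω]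
  have hterm (S : Finset I) : ∫ ω, g S ω * r ^ #{i ∈ S | ω i = true} ∂μ
      ≤ (∫ ω, g S ω ∂μ) * exp ((r - 1) * p * M) := by
    by_cases hS : ∃ ω, A ω ∧ E ω = S
    · obtain ⟨ω₀, hAω₀, rfl⟩ := hS
      have hMω₀ := hM ω₀ hAω₀
      rw [integral_mul_eq_mul_integral_of_dependsOn hind (hEJ ω₀)
        (fun ω ω' h ↦ by simp only [g, hA h, hE h])
        fun ω ω' h ↦ by congr 2; exact filter_congr fun i hi ↦ by rw [h i hi]]
      refine mul_le_mul_of_nonneg_left ((integral_pow_card_filter_le hind hp hr _).trans ?_)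
        (integral_nonneg fun ω ↦ by positivity)
      gcongr
    · have hg0 (ω : I → Bool) : g S ω = 0 := if_neg fun h ↦ hS ⟨ω, h⟩
      simp [hg0]
  have hg : ∫ ω, ∑ S, g S ω ∂μ ≤ 1 := by
    calc ∫ ω, ∑ S, g S ω ∂μ ≤ ∫ _, (1 : ℝ) ∂μ :=
          integral_mono .of_finite (integrable_const _) fun ω ↦ by
            by_cases hAω : A ω <;> simp [g, hAω]
      _ = 1 := by simp
  calc ∫ ω, (if A ω then r ^ #{i ∈ E ω | ω i = true} else 0) ∂μ
      = ∑ S, ∫ ω, g S ω * r ^ #{i ∈ S | ω i = true} ∂μ := by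
        simp_rw [hsplit]; exact integral_finsetSum _ fun _ _ ↦ .of_finite
    _ ≤ ∑ S, (∫ ω, g S ω ∂μ) * exp ((r - 1) * p * M) := sum_le_sum fun S _ ↦ hterm S
    _ = (∫ ω, ∑ S, g S ω ∂μ) * exp ((r - 1) * p * M) := by
        rw [← sum_mul, integral_finsetSum _ fun _ _ ↦ .of_finite]
    _ ≤ exp ((r - 1) * p * M) := mul_le_of_le_one_left (exp_pos _).le hg

lemma measureReal_le_card_filter_le_exp (hind : iIndepFun (fun i ω ↦ ω i) μ) (hp0 : 0 ≤ p)
    (hp : ∀ i, μ.real {ω | ω i = true} ≤ p) {δ : ℝ} (hδ : 0 ≤ δ) (hA : DependsOn A J)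
    (hE : DependsOn E J) (hEJ : ∀ ω, Disjoint J (E ω)) (hM : ∀ ω, A ω → (#(E ω) : ℝ) ≤ M)
    {T : ℝ} (hT : (1 + δ) * p * M ≤ T) :
    μ.real {ω | A ω ∧ T ≤ #{i ∈ E ω | ω i = true}} ≤ exp (-chernoffRate δ * T) := by
  have := hind.isProbabilityMeasure
  have hδ1 : 0 < 1 + δ := by linarith
  have hmarkov : (1 + δ) ^ T * μ.real {ω | A ω ∧ T ≤ #{i ∈ E ω | ω i = true}}
      ≤ ∫ ω, (if A ω then (1 + δ) ^ #{i ∈ E ω | ω i = true} else 0) ∂μ := by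
    refine (mul_le_mul_of_nonneg_left (measureReal_mono fun ω hω ↦ ?_) (by positivity)).trans
      (mul_meas_ge_le_integral_of_nonneg (ae_of_all _ fun ω ↦ by positivity) .of_finite _)
    obtain ⟨hAω, hTω⟩ := hω
    simp only [Set.mem_ofPred_eq, if_pos hAω, ← rpow_natCast]
    exact rpow_le_rpow_of_exponent_le (by linarith) hTω
  have hmgf := integral_ite_pow_card_filter_le (r := 1 + δ) hind hp0 hp (by linarith) hA hE hEJ hM
  rw [add_sub_cancel_left] at hmgf
  have hpM : p * M ≤ T / (1 + δ) := by rw [le_div_iff₀' hδ1]; linarith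
  calc μ.real {ω | A ω ∧ T ≤ #{i ∈ E ω | ω i = true}}
      ≤ (1 + δ) ^ (-T) * exp (δ * p * M) := by
        rw [rpow_neg hδ1.le, inv_mul_eq_div, le_div_iff₀' (by positivity)]
        exact hmarkov.trans hmgf
    _ = exp (-log (1 + δ) * T + δ * (p * M)) := by
        rw [rpow_def_of_pos hδ1, ← exp_add]; ring_nf
    _ ≤ exp (-chernoffRate δ * T) := by
        have hrate : -chernoffRate δ * T = -log (1 + δ) * T + δ * (T / (1 + δ)) := by
          rw [chernoffRate]; ring
        rw [exp_le_exp, hrate]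
        linarith [mul_le_mul_of_nonneg_left hpM hδ]

end Chernoff

section Neighbourhood

variable {n d : ℕ} {ω : Finset (Fin n) → Bool} {σ ρ : Finset (Fin n)}

def cofaces (d : ℕ) (σ : Finset (Fin n)) : Finset (Finset (Fin n)) :=
  {τ | #τ = d + 1 ∧ σ ⊆ τ}

def neighbourVertices (ω : Finset (Fin n) → Bool) (σ : Finset (Fin n)) : Finset (Fin n) :=
  {u | u ∉ σ ∧ ω (insert u σ) = true}

def spannedByNeighbours (d : ℕ) (ω : Finset (Fin n) → Bool) (σ : Finset (Fin n)) :
    Finset (Finset (Fin n)) :=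
  {τ | #τ = d + 1 ∧ ¬σ ⊆ τ ∧ ∃ σ' σ'', nbr n d ω σ σ' ∧ nbr n d ω σ σ'' ∧ τ = σ' ∪ σ''}

def typicalNeighbourhoods (n d : ℕ) (D T : ℝ) : Set (Finset (Fin n) → Bool) :=
  {ω | ∀ σ : Finset (Fin n), σ.card = d →
    ((#{τ | τ.card = d + 1 ∧ σ ⊆ τ ∧ ω τ = true} : ℕ) : ℝ) < D ∧
    ((#{τ | τ.card = d + 1 ∧ ω τ = true ∧ ¬σ ⊆ τ ∧
      ∃ σ' σ'' : Finset (Fin n), nbr n d ω σ σ' ∧ nbr n d ω σ σ'' ∧ τ = σ' ∪ σ''} : ℕ) : ℝ) < T}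

lemma typicalNeighbourhoods_mono {D D' T : ℝ} (hD : D ≤ D') :
    typicalNeighbourhoods n d D T ⊆ typicalNeighbourhoods n d D' T :=
  fun _ hω σ hσ ↦ ⟨((hω σ hσ).1).trans_le hD, (hω σ hσ).2⟩

lemma card_cofaces_le (hσ : #σ = d) : #(cofaces d σ) ≤ n := by
  calc #(cofaces d σ) ≤ #(univ : Finset (Fin n)) :=
        card_le_card_of_surjOn (fun u ↦ insert u σ) fun τ hτ ↦ by
          obtain ⟨-, hcard, hστ⟩ := mem_filter.1 hτ
          obtain ⟨u, -, rfl⟩ := exists_eq_insert_iff.2 ⟨hστ, by rw [hσ, hcard]⟩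
          exact ⟨u, mem_univ _, rfl⟩
    _ = n := by simp

lemma card_neighbourVertices_le (hσ : #σ = d) :
    #(neighbourVertices ω σ) ≤ #{τ ∈ cofaces d σ | ω τ = true} := by
  refine card_le_card_of_injOn (fun u ↦ insert u σ) (fun u hu ↦ ?_) fun u hu v hv huv ↦ ?_
  · obtain ⟨-, huσ, hω⟩ := mem_filter.1 hu
    simp [cofaces, card_insert_of_notMem huσ, hσ, subset_insert, hω]
  · have huσ := (mem_filter.1 hu).2.1
    have : u ∈ insert v σ := (show insert u σ = insert v σ from huv) ▸ mem_insert_self u σ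
    exact (mem_insert.1 this).resolve_right huσ

lemma insert_eq_union_of_nbr (hσ : #σ = d) (h : nbr n d ω σ ρ) {u : Fin n} (hu : u ∈ ρ \ σ) :
    insert u σ = σ ∪ ρ := by
  obtain ⟨huρ, huσ⟩ := mem_sdiff.1 hu
  refine eq_of_subset_of_card_le (insert_subset (mem_union_right _ huρ) subset_union_left) ?_
  rw [h.2.1, card_insert_of_notMem huσ, hσ]

lemma card_sdiff_of_nbr (hσ : #σ = d) (h : nbr n d ω σ ρ) : #(ρ \ σ) = 1 := by
  have := card_sdiff_add_card ρ σ
  rw [union_comm, h.2.1, hσ] at this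
  omega

lemma sdiff_subset_neighbourVertices_of_nbr (hσ : #σ = d) (h : nbr n d ω σ ρ) :
    ρ \ σ ⊆ neighbourVertices ω σ := fun u hu ↦ by
  simp [neighbourVertices, (mem_sdiff.1 hu).2, insert_eq_union_of_nbr hσ h hu, h.2.2]

lemma sdiff_mem_powersetCard_of_mem_spannedByNeighbours (hσ : #σ = d) {τ : Finset (Fin n)}
    (hτ : τ ∈ spannedByNeighbours d ω σ) :
    σ \ τ ∈ σ.powersetCard 1 ∧ τ \ σ ∈ (neighbourVertices ω σ).powersetCard 2 := by
  obtain ⟨-, hcard, hστ, σ', σ'', h', h'', rfl⟩ := mem_filter.1 hτ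
  have hsub : (σ' ∪ σ'') \ σ ⊆ neighbourVertices ω σ := by
    rw [union_sdiff_distrib]
    exact union_subset (sdiff_subset_neighbourVertices_of_nbr hσ h')
      (sdiff_subset_neighbourVertices_of_nbr hσ h'')
  have hle : #((σ' ∪ σ'') \ σ) ≤ 2 := by
    rw [union_sdiff_distrib]
    exact (card_union_le _ _).trans (by rw [card_sdiff_of_nbr hσ h', card_sdiff_of_nbr hσ h''])
  have hpos : 0 < #(σ \ (σ' ∪ σ'')) := card_pos.2 (sdiff_nonempty.2 hστ)
  have h₁ := card_sdiff_add_card_inter σ (σ' ∪ σ'')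
  have h₂ := card_sdiff_add_card_inter (σ' ∪ σ'') σ
  rw [inter_comm] at h₂
  simp only [mem_powersetCard]
  exact ⟨⟨sdiff_subset, by omega⟩, hsub, by omega⟩

lemma card_spannedByNeighbours_le (hσ : #σ = d) :
    #(spannedByNeighbours d ω σ) ≤ d * (#(neighbourVertices ω σ)).choose 2 := by
  -- `τ` is recovered from the vertex of `σ` it misses and the vertices it adds
  have hrecover (τ : Finset (Fin n)) : σ \ (σ \ τ) ∪ τ \ σ = τ := by
    ext x; simp only [Finset.mem_union, Finset.mem_sdiff]; tauto
  calc #(spannedByNeighbours d ω σ)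
      ≤ #(σ.powersetCard 1 ×ˢ (neighbourVertices ω σ).powersetCard 2) :=
        card_le_card_of_injOn (fun τ ↦ (σ \ τ, τ \ σ))
          (fun τ hτ ↦ mem_product.2 (sdiff_mem_powersetCard_of_mem_spannedByNeighbours hσ hτ))
          fun τ _ τ' _ h ↦ by
            rw [← hrecover τ, ← hrecover τ', (Prod.mk.inj h).1, (Prod.mk.inj h).2]
    _ = d * (#(neighbourVertices ω σ)).choose 2 := by
        rw [card_product, card_powersetCard, card_powersetCard, hσ, Nat.choose_one_right]

lemma card_filter_eq_card_cofaces_filter (ω : Finset (Fin n) → Bool) (σ : Finset (Fin n)) :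
    #{τ | #τ = d + 1 ∧ σ ⊆ τ ∧ ω τ = true} = #{τ ∈ cofaces d σ | ω τ = true} := by
  rw [cofaces, filter_filter]
  simp only [and_assoc]

lemma card_filter_eq_card_spannedByNeighbours_filter (ω : Finset (Fin n) → Bool)
    (σ : Finset (Fin n)) :
    #{τ | #τ = d + 1 ∧ ω τ = true ∧ ¬σ ⊆ τ ∧
      ∃ σ' σ'', nbr n d ω σ σ' ∧ nbr n d ω σ σ'' ∧ τ = σ' ∪ σ''} =
      #{τ ∈ spannedByNeighbours d ω σ | ω τ = true} := by
  rw [spannedByNeighbours, filter_filter]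
  congr 1
  exact filter_congr fun τ _ ↦ by tauto

lemma dependsOn_nbr (d : ℕ) (σ ρ : Finset (Fin n)) :
    DependsOn (fun ω ↦ nbr n d ω σ ρ) {τ | σ ⊆ τ} :=
  fun ω ω' h ↦ by simp only [nbr, h (σ ∪ ρ) subset_union_left]

lemma dependsOn_spannedByNeighbours (d : ℕ) (σ : Finset (Fin n)) :
    DependsOn (fun ω ↦ spannedByNeighbours d ω σ) {τ | σ ⊆ τ} :=
  fun ω ω' h ↦ by simp only [spannedByNeighbours, fun ρ ↦ dependsOn_nbr d σ ρ h]

lemma dependsOn_card_cofaces_filter (d : ℕ) (σ : Finset (Fin n)) :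
    DependsOn (fun ω ↦ #{τ ∈ cofaces d σ | ω τ = true}) {τ | σ ⊆ τ} :=
  fun ω ω' h ↦ congrArg card <| filter_congr fun τ hτ ↦ by rw [h τ (mem_filter.1 hτ).2.2]

end Neighbourhood

section NeighbourhoodProbability

variable {n d : ℕ} {μ : Measure (Finset (Fin n) → Bool)} {p : ℝ} {σ : Finset (Fin n)}

lemma measureReal_le_card_cofaces_le (hind : iIndepFun (fun τ ω ↦ ω τ) μ) (hp0 : 0 ≤ p)
    (hp : ∀ τ, μ.real {ω | ω τ = true} ≤ p) (hσ : #σ = d) {δ m : ℝ} (hδ : 0 ≤ δ)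
    (hm : (1 + δ) * p * n ≤ m) :
    μ.real {ω | m ≤ #{τ ∈ cofaces d σ | ω τ = true}} ≤ exp (-chernoffRate δ * m) := by
  simpa only [true_and] using measureReal_le_card_filter_le_exp hind hp0 hp hδ (J := ∅)
    (A := fun _ ↦ True) (E := fun _ ↦ cofaces d σ) (fun _ _ _ ↦ rfl) (fun _ _ _ ↦ rfl) (by simp)
    (fun _ _ ↦ mod_cast card_cofaces_le hσ) hm

lemma measureReal_card_spannedByNeighbours_le (hind : iIndepFun (fun τ ω ↦ ω τ) μ)
    (hp0 : 0 ≤ p) (hp : ∀ τ, μ.real {ω | ω τ = true} ≤ p) (hσ : #σ = d) {ε m T : ℝ}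
    (hε : 0 ≤ ε) (hT : (1 + ε) * p * (d / 2 * m ^ 2) ≤ T) :
    μ.real {ω | #{τ ∈ cofaces d σ | ω τ = true} < m ∧
      T ≤ #{τ ∈ spannedByNeighbours d ω σ | ω τ = true}} ≤ exp (-chernoffRate ε * T) := by
  have hM : ∀ ω : Finset (Fin n) → Bool, (#{τ ∈ cofaces d σ | ω τ = true} : ℝ) < m →
      (#(spannedByNeighbours d ω σ) : ℝ) ≤ d / 2 * m ^ 2 := by
    intro ω hω
    set k := #(neighbourVertices ω σ)
    have hk : (k : ℝ) < m := lt_of_le_of_lt (mod_cast card_neighbourVertices_le hσ) hω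
    calc (#(spannedByNeighbours d ω σ) : ℝ) ≤ d * (k * (k - 1) / 2) := by
          rw [← Nat.cast_choose_two]; exact_mod_cast card_spannedByNeighbours_le hσ
      _ ≤ d / 2 * m ^ 2 := by
          have hk0 : (0 : ℝ) ≤ k := k.cast_nonneg
          have : (k : ℝ) * (k - 1) ≤ m ^ 2 := by nlinarith
          have hd : (0 : ℝ) ≤ d := d.cast_nonneg
          nlinarith
  have hJ : {τ | σ ⊆ τ} ⊆ ((({τ | σ ⊆ τ} : Finset (Finset (Fin n)))) : Set (Finset (Fin n))) :=
    fun τ hτ ↦ by simpa using hτ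
  exact measureReal_le_card_filter_le_exp hind hp0 hp hε
    (fun ω ω' h ↦ by simp only [(dependsOn_card_cofaces_filter d σ).mono hJ h])
    ((dependsOn_spannedByNeighbours d σ).mono hJ)
    (fun ω ↦ disjoint_left.2 fun τ hτ hτ' ↦ (mem_filter.1 hτ').2.2.1 (mem_filter.1 hτ).2) hM hT

lemma one_sub_le_measureReal_typicalNeighbourhoods (hind : iIndepFun (fun τ ω ↦ ω τ) μ)
    (hp0 : 0 ≤ p) (hp : ∀ τ, μ.real {ω | ω τ = true} ≤ p) {δ ε m T : ℝ} (hδ : 0 ≤ δ)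
    (hε : 0 ≤ ε) (hm : (1 + δ) * p * n ≤ m) (hT : (1 + ε) * p * (d / 2 * m ^ 2) ≤ T) :
    1 - n ^ d * (exp (-chernoffRate δ * m) + exp (-chernoffRate ε * T)) ≤
      μ.real (typicalNeighbourhoods n d m T) := by
  have := hind.isProbabilityMeasure
  set bad : Finset (Fin n) → Set (Finset (Fin n) → Bool) := fun σ ↦
    {ω | m ≤ #{τ ∈ cofaces d σ | ω τ = true}} ∪
    {ω | #{τ ∈ cofaces d σ | ω τ = true} < m ∧
      T ≤ #{τ ∈ spannedByNeighbours d ω σ | ω τ = true}}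
  have hcompl : (typicalNeighbourhoods n d m T)ᶜ ⊆
      ⋃ σ ∈ (univ : Finset (Fin n)).powersetCard d, bad σ := by
    intro ω hω
    simp only [typicalNeighbourhoods, card_filter_eq_card_cofaces_filter,
      card_filter_eq_card_spannedByNeighbours_filter, Set.mem_compl_iff, Set.mem_ofPred_eq,
      not_forall, not_and_or, not_lt] at hω
    obtain ⟨σ, hσ, h⟩ := hω
    simp only [Set.mem_iUnion, mem_powersetCard, subset_univ, true_and]
    refine ⟨σ, hσ, ?_⟩
    by_cases hdeg : m ≤ #{τ ∈ cofaces d σ | ω τ = true}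
    · exact Or.inl hdeg
    · exact Or.inr ⟨not_le.1 hdeg, h.resolve_left hdeg⟩
  have hbad : ∀ σ ∈ (univ : Finset (Fin n)).powersetCard d,
      μ.real (bad σ) ≤ exp (-chernoffRate δ * m) + exp (-chernoffRate ε * T) := fun σ hσ ↦
    (measureReal_union_le _ _).trans (add_le_add
      (measureReal_le_card_cofaces_le hind hp0 hp (mem_powersetCard.1 hσ).2 hδ hm)
      (measureReal_card_spannedByNeighbours_le hind hp0 hp (mem_powersetCard.1 hσ).2 hε hT))
  have hcard : (#((univ : Finset (Fin n)).powersetCard d) : ℝ) ≤ n ^ d := by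
    rw [card_powersetCard, card_univ, Fintype.card_fin]
    exact_mod_cast Nat.choose_le_pow n d
  calc 1 - n ^ d * (exp (-chernoffRate δ * m) + exp (-chernoffRate ε * T))
      ≤ 1 - ∑ σ ∈ (univ : Finset (Fin n)).powersetCard d, μ.real (bad σ) := by
        gcongr
        calc ∑ σ ∈ (univ : Finset (Fin n)).powersetCard d, μ.real (bad σ)
            ≤ #((univ : Finset (Fin n)).powersetCard d) *
                (exp (-chernoffRate δ * m) + exp (-chernoffRate ε * T)) := by
              rw [← nsmul_eq_mul, ← sum_const]
              exact sum_le_sum hbad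
          _ ≤ _ := by gcongr
    _ ≤ 1 - μ.real (typicalNeighbourhoods n d m T)ᶜ := by
        gcongr
        exact (measureReal_mono hcompl (measure_ne_top _ _)).trans
          (measureReal_biUnion_finset_le _ _)
    _ = _ := by rw [probReal_compl_eq_one_sub .of_discrete, sub_sub_cancel]

end NeighbourhoodProbability

instance (n : ℕ) (p : ℝ≥0∞) : IsProbabilityMeasure (linialMeshulam n p) := by
  unfold linialMeshulam; infer_instance

lemma iIndepFun_linialMeshulam (n : ℕ) (p : ℝ≥0∞) :
    iIndepFun (fun τ ω ↦ ω τ) (linialMeshulam n p) :=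
  iIndepFun_pi (X := fun _ ↦ id) fun _ ↦ aemeasurable_id

lemma measureReal_linialMeshulam_le {n : ℕ} {q : ℝ} (hq : 0 ≤ q) (τ : Finset (Fin n)) :
    (linialMeshulam n (ENNReal.ofReal q)).real {ω | ω τ = true} ≤ q := by
  rw [measureReal_def,
    show {ω : Finset (Fin n) → Bool | ω τ = true} = (fun ω ↦ ω τ) ⁻¹' {true} from rfl,
    linialMeshulam,
    (measurePreserving_eval _ τ).measure_preimage (measurableSet_singleton _).nullMeasurableSet,
    PMF.toMeasure_apply_singleton _ _ (measurableSet_singleton _)]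
  erw [PMF.bernoulli_apply]
  simpa [ENNReal.toReal_ofReal hq] using
    ENNReal.toReal_mono ENNReal.ofReal_ne_top (min_le_left (ENNReal.ofReal q) 1)

lemma rpow_le_mul_rpow_neg_mul {x α b s : ℝ} (hx : 1 ≤ x) (hb : b ≤ 1 - α) (hs : 1 ≤ s) :
    x ^ b ≤ s * x ^ (-α) * x := by
  calc x ^ b ≤ x ^ (1 - α) := rpow_le_rpow_of_exponent_le hx hb
    _ = 1 * x ^ (-α) * x := by rw [sub_eq_neg_add, rpow_add_one (by positivity)]; ring
    _ ≤ s * x ^ (-α) * x := by gcongr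

lemma rpow_le_two_mul {x α b c d ε : ℝ} (hx : 1 ≤ x) (hb : b ≤ 2 - 3 * α + c) (hd : 1 ≤ d)
    (hε : 0 ≤ ε) :
    x ^ b ≤ 2 * (d / 2 * x ^ 2 * ((1 + ε) * x ^ (-α)) ^ 2 * ((1 + x ^ c) * x ^ (-α))) := by
  have hx0 : 0 < x := by linarith
  calc x ^ b ≤ x ^ (2 - 3 * α + c) := rpow_le_rpow_of_exponent_le hx hb
    _ = 1 * x ^ 2 * (1 * x ^ (-α)) ^ 2 * (x ^ c * x ^ (-α)) := by
        rw [show 2 - 3 * α + c = (2 : ℕ) + -α * (3 : ℕ) + c by push_cast; ring, rpow_add hx0,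
          rpow_add hx0, rpow_mul hx0.le, rpow_natCast, rpow_natCast]
        ring
    _ ≤ d * x ^ 2 * ((1 + ε) * x ^ (-α)) ^ 2 * ((1 + x ^ c) * x ^ (-α)) := by
        gcongr <;> linarith [rpow_nonneg hx0.le c]
    _ = 2 * (d / 2 * x ^ 2 * ((1 + ε) * x ^ (-α)) ^ 2 * ((1 + x ^ c) * x ^ (-α))) := by ring

lemma exp_neg_add_exp_neg_le {x α b c d ε δ κ : ℝ} (hx : 1 ≤ x) (hd : 1 ≤ d) (hε : 0 < ε)
    (hδ : 0 < δ) (hκδ : κ ≤ chernoffRate δ) (hκε : κ ≤ chernoffRate ε / 2) (hb₁ : b ≤ 1 - α)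
    (hb₂ : b ≤ 2 - 3 * α + c) :
    exp (-chernoffRate δ * ((1 + δ) * x ^ (-α) * x)) +
      exp (-chernoffRate ε * (d / 2 * x ^ 2 * ((1 + ε) * x ^ (-α)) ^ 2 * ((1 + x ^ c) * x ^ (-α))))
      ≤ 2 * exp (-κ * x ^ b) := by
  rw [two_mul]
  refine add_le_add (exp_le_exp.2 ?_) (exp_le_exp.2 ?_) <;> rw [neg_mul, neg_mul, neg_le_neg_iff]
  · exact mul_le_mul hκδ (rpow_le_mul_rpow_neg_mul hx hb₁ (by linarith)) (by positivity)
      (chernoffRate_pos hδ).le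
  · calc κ * x ^ b
        ≤ chernoffRate ε / 2 *
          (2 * (d / 2 * x ^ 2 * ((1 + ε) * x ^ (-α)) ^ 2 * ((1 + x ^ c) * x ^ (-α)))) :=
          mul_le_mul hκε (rpow_le_two_mul hx hb₂ hd hε.le) (by positivity)
            (half_pos (chernoffRate_pos hε)).le
      _ = _ := by ring

lemma eventually_mul_pow_mul_exp_le {κ b : ℝ} (hκ : 0 < κ) (hb : 0 < b) (C : ℝ) (d : ℕ) :
    ∀ᶠ x : ℝ in atTop, C * x ^ d * exp (-κ * x ^ b) ≤ exp (-(κ / 2) * x ^ b) := by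
  have hlim : Tendsto (fun x : ℝ ↦ C * (x ^ d * exp (-(κ / 2) * x ^ b))) atTop (𝓝 0) := by
    have := ((tendsto_rpow_mul_exp_neg_mul_atTop_nhds_zero (d / b) (κ / 2) (half_pos hκ)).comp
      (tendsto_rpow_atTop hb)).const_mul C
    rw [mul_zero] at this
    refine this.congr' (eventually_ge_atTop 0 |>.mono fun x hx ↦ ?_)
    simp only [Function.comp, ← rpow_mul hx, mul_div_cancel₀ _ hb.ne', rpow_natCast]
  filter_upwards [hlim.eventually_lt_const one_pos] with x hx
  calc C * x ^ d * exp (-κ * x ^ b)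
      = C * (x ^ d * exp (-(κ / 2) * x ^ b)) * exp (-(κ / 2) * x ^ b) := by
        conv_rhs => rw [mul_assoc, mul_assoc, ← exp_add]
        ring_nf
    _ ≤ exp (-(κ / 2) * x ^ b) := mul_le_of_le_one_left (exp_pos _).le hx.le

theorem neighbourhoods_are_typical_general (d : ℕ) (hd : 0 < d)
    (α c ε : ℝ) (hα1 : α < 1) (hc : 3 * α - 2 < c)
    (hε : ε ∈ Set.Ioo (0 : ℝ) 1) :
    ∃ a > (0 : ℝ), ∃ b > (0 : ℝ), ∃ N : ℕ, ∀ n : ℕ, N ≤ n →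
      1 - Real.exp (-a * (n : ℝ) ^ b) ≤
        (linialMeshulam n (ENNReal.ofReal ((n : ℝ) ^ (-α)))
          {ω | ∀ σ : Finset (Fin n), σ.card = d →
            (((Finset.univ.filter fun τ : Finset (Fin n) =>
                τ.card = d + 1 ∧ σ ⊆ τ ∧ ω τ = true).card : ℝ) <
              (n : ℝ) * ((1 + ε) * (n : ℝ) ^ (-α)) ∧
            ((Finset.univ.filter fun τ : Finset (Fin n) =>
                τ.card = d + 1 ∧ ω τ = true ∧ ¬σ ⊆ τ ∧
                ∃ σ' σ'' : Finset (Fin n), nbr n d ω σ σ' ∧ nbr n d ω σ σ'' ∧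
                  τ = σ' ∪ σ'').card : ℝ) <
              (d : ℝ) / 2 * (n : ℝ) ^ 2 * ((1 + ε) * (n : ℝ) ^ (-α)) ^ 2 *
                ((1 + (n : ℝ) ^ c) * (n : ℝ) ^ (-α)))}).toReal := by
  obtain ⟨hε0, -⟩ := hε
  have hsqrt : 1 < √(1 + ε) := by rw [lt_sqrt zero_le_one]; linarith
  -- With `(1 + δ)² = 1 + ε`, degrees below `(1 + δ) n p` leave at most `(d/2)(1 + ε)(n p)²`
  -- candidates, so the threshold exceeds `1 + ε` times their mean even when `n ^ c → 0`.
  set δ := √(1 + ε) - 1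
  have hδ0 : 0 < δ := by linarith
  have hδ : (1 + δ) ^ 2 = 1 + ε := by rw [add_sub_cancel, sq_sqrt (by linarith)]
  set κ := min (chernoffRate δ) (chernoffRate ε / 2)
  have hκ : 0 < κ := lt_min (chernoffRate_pos hδ0) (half_pos (chernoffRate_pos hε0))
  set b := min (1 - α) (2 - 3 * α + c)
  have hb : 0 < b := lt_min (by linarith) (by linarith)
  refine ⟨κ / 2, half_pos hκ, b, hb, ?_⟩
  obtain ⟨N, hN⟩ := eventually_atTop.1 <| tendsto_natCast_atTop_atTop.eventually <|
    eventually_mul_pow_mul_exp_le hκ hb 2 d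
  refine ⟨max N 1, fun n hn ↦ ?_⟩
  have hn1 : (1 : ℝ) ≤ n := mod_cast (le_max_right N 1).trans hn
  set p := (n : ℝ) ^ (-α)
  set T := (d : ℝ) / 2 * n ^ 2 * ((1 + ε) * p) ^ 2 * ((1 + n ^ c) * p) with hT
  have hpair : (1 + ε) * p * (d / 2 * ((1 + δ) * p * n) ^ 2) ≤ T := by
    calc _ = (d : ℝ) / 2 * n ^ 2 * ((1 + ε) * p) ^ 2 * (1 * p) := by rw [← hδ]; ring
      _ ≤ T := by rw [hT]; gcongr; linarith [rpow_nonneg (zero_le_one.trans hn1) c]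
  have hexp := exp_neg_add_exp_neg_le (α := α) (b := b) (c := c) (d := d) (κ := κ) hn1
    (mod_cast hd) hε0 hδ0 (min_le_left _ _) (min_le_right _ _) (min_le_left _ _) (min_le_right _ _)
  calc 1 - exp (-(κ / 2) * n ^ b)
      ≤ 1 - n ^ d * (exp (-chernoffRate δ * ((1 + δ) * p * n)) + exp (-chernoffRate ε * T)) := by
        have := mul_le_mul_of_nonneg_left hexp (by positivity : (0 : ℝ) ≤ n ^ d)
        linarith [hN n ((le_max_left N 1).trans hn)]
    _ ≤ _ := one_sub_le_measureReal_typicalNeighbourhoods (iIndepFun_linialMeshulam n _)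
          (by positivity) (measureReal_linialMeshulam_le (by positivity)) hδ0.le hε0.le
          le_rfl hpair
    _ ≤ (linialMeshulam n (ENNReal.ofReal p)).real
          (typicalNeighbourhoods n d (n * ((1 + ε) * p)) T) := by
        refine measureReal_mono (typicalNeighbourhoods_mono ?_) (measure_ne_top _ _)
        have : 1 + δ ≤ 1 + ε := by nlinarith
        calc (1 + δ) * p * n ≤ (1 + ε) * p * n := by gcongr
          _ = n * ((1 + ε) * p) := by ring

/-- In `Y_d(n, n^{-α})` with `0 < α < 1` and `c > 3α - 2`, setting
`q_n = (1+ε) p_n` and `t_n = (1+n^c) p_n`, with probability at least `1 - e^{-a n^b}`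
every `(d-1)`-simplex `σ` has `deg σ < n q_n` and fewer than `(d/2) n² q_n² t_n`
`d`-simplexes spanned by pairs of neighbours of `σ` that do not contain `σ`. -/
theorem neighbourhoods_are_typical (d : ℕ) (hd : 0 < d)
    (α c ε : ℝ) (hα0 : 0 < α) (hα1 : α < 1) (hc : 3 * α - 2 < c)
    (hε : ε ∈ Set.Ioo (0 : ℝ) 1) :
    ∃ a > (0 : ℝ), ∃ b > (0 : ℝ), ∃ N : ℕ, ∀ n : ℕ, N ≤ n →
      1 - Real.exp (-a * (n : ℝ) ^ b) ≤
        (linialMeshulam n (ENNReal.ofReal ((n : ℝ) ^ (-α)))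
          {ω | ∀ σ : Finset (Fin n), σ.card = d →
            (((Finset.univ.filter fun τ : Finset (Fin n) =>
                τ.card = d + 1 ∧ σ ⊆ τ ∧ ω τ = true).card : ℝ) <
              (n : ℝ) * ((1 + ε) * (n : ℝ) ^ (-α)) ∧
            ((Finset.univ.filter fun τ : Finset (Fin n) =>
                τ.card = d + 1 ∧ ω τ = true ∧ ¬σ ⊆ τ ∧
                ∃ σ' σ'' : Finset (Fin n), nbr n d ω σ σ' ∧ nbr n d ω σ σ'' ∧
                  τ = σ' ∪ σ'').card : ℝ) <
              (d : ℝ) / 2 * (n : ℝ) ^ 2 * ((1 + ε) * (n : ℝ) ^ (-α)) ^ 2 *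
                ((1 + (n : ℝ) ^ c) * (n : ℝ) ^ (-α)))}).toReal :=
  neighbourhoods_are_typical_general d hd α c ε hα1 hc hε
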